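/- Let A be strictly positive and let T1, T2 be bounded linear operators on H each admitting an A-adjoint (i.e. for each i there exists S_i with A∘S_i = T_i*∘A). Then max{w_A(T1), w_A(T2)} ≤ w_B([[T1,T2],[-T2,-T1]]) ≤ w_A(T1) + w_A(T2). -/

import Mathlib

open scoped InnerProductSpace
open ContinuousLinearMap

variable {H : Type*} [NormedAddCommGroup H] [InnerProductSpace ℂ H] [CompleteSpace H]

/-- The `A`-seminorm `‖x‖_A = √⟨Ax,x⟩`. -/
noncomputable def aNorm (A : H →L[ℂ] H) (x : H) : ℝ :=
  Real.sqrt (⟪A x, x⟫_ℂ).re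

/-- The `A`-numerical radius `w_A(T) = sup {|⟨ATx,x⟩| : x ∈ H, ‖x‖_A = 1}`. -/
noncomputable def wA (A T : H →L[ℂ] H) : ℝ :=
  sSup {r : ℝ | ∃ x : H, aNorm A x = 1 ∧ r = ‖⟪A (T x), x⟫_ℂ‖}

/-- The `A`-operator seminorm `‖T‖_A = sup {‖Tx‖_A : x ∈ closure (range A), ‖x‖_A = 1}`. -/
noncomputable def aOpNorm (A T : H →L[ℂ] H) : ℝ :=
  sSup {r : ℝ | ∃ x : H, x ∈ closure (Set.range (⇑A)) ∧ aNorm A x = 1 ∧ r = aNorm A (T x)}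

/-- The `B`-numerical radius of the operator matrix `[[T1,T2],[T3,T4]]` acting on `H ⊕ H` by
`(x, y) ↦ (T1 x + T2 y, T3 x + T4 y)`, where `B = [[A,0],[0,A]]`:
`w_B(T) = sup {|⟨BTz,z⟩| : z ∈ H ⊕ H, ‖z‖_B = 1}`. -/
noncomputable def wB (A T1 T2 T3 T4 : H →L[ℂ] H) : ℝ :=
  sSup {r : ℝ | ∃ x y : H, Real.sqrt ((⟪A x, x⟫_ℂ).re + (⟪A y, y⟫_ℂ).re) = 1 ∧
    r = ‖⟪A (T1 x + T2 y), x⟫_ℂ + ⟪A (T3 x + T4 y), y⟫_ℂ‖}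


/-! The semi-inner product `⟪x, y⟫_A = ⟪A x, y⟫` satisfies Cauchy–Schwarz. If `S` is an
`A`-adjoint of `T`, then `S T` is `A`-symmetric, so `n ↦ ‖(S T)ⁿ x‖_A` is log-convex and grows at
most like `‖S T‖ⁿ`; this gives `‖T x‖_A ≤ √‖S T‖ ‖x‖_A`. Hence `w_A(T)` is a finite supremum and
`|⟪T x, x⟫_A| ≤ w_A(T) ‖x‖_A²`.

On `z = (x, y)` the form `⟪B T z, z⟫` of `T = [[T₁, T₂], [-T₂, -T₁]]` equals
`⟪T₁ x, x⟫_A - ⟪T₁ y, y⟫_A + ⟪T₂ y, x⟫_A - ⟪T₂ x, y⟫_A`; polarizing the last two terms with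
`x ± i y` bounds them by `w_A(T₂) (‖x‖_A² + ‖y‖_A²)`, which gives the upper bound. For the lower
bound, the form equals `⟪T₁ x, x⟫_A` at `(x, 0)` and `-i ⟪T₂ x, x⟫_A` at `(x, i x) / √2`. -/

section

omit [CompleteSpace H]

section LogConvex

variable {a : ℕ → ℝ} (ha : ∀ n, 0 ≤ a n) (hconv : ∀ n, a (n + 1) ^ 2 ≤ a n * a (n + 2))
include ha hconv

lemma mul_le_mul_succ_of_logConvex (n : ℕ) : a 1 * a n ≤ a 0 * a (n + 1) := by
  induction n with
  | zero => rw [mul_comm]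
  | succ n ih =>
    rcases (ha (n + 1)).eq_or_lt with h0 | h0
    · rw [← h0, mul_zero]
      exact mul_nonneg (ha 0) (ha (n + 2))
    · refine le_of_mul_le_mul_right ?_ h0
      calc a 1 * a (n + 1) * a (n + 1) = a 1 * a (n + 1) ^ 2 := by ring
        _ ≤ a 1 * (a n * a (n + 2)) := mul_le_mul_of_nonneg_left (hconv n) (ha 1)
        _ = a 1 * a n * a (n + 2) := by ring
        _ ≤ a 0 * a (n + 1) * a (n + 2) := mul_le_mul_of_nonneg_right ih (ha (n + 2))
        _ = a 0 * a (n + 2) * a (n + 1) := by ring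

lemma pow_mul_le_pow_mul_of_logConvex (n : ℕ) : a 1 ^ n * a 0 ≤ a 0 ^ n * a n := by
  induction n with
  | zero => simp
  | succ n ih =>
    calc a 1 ^ (n + 1) * a 0 = a 1 * (a 1 ^ n * a 0) := by ring
      _ ≤ a 1 * (a 0 ^ n * a n) := mul_le_mul_of_nonneg_left ih (ha 1)
      _ = a 0 ^ n * (a 1 * a n) := by ring
      _ ≤ a 0 ^ n * (a 0 * a (n + 1)) :=
        mul_le_mul_of_nonneg_left (mul_le_mul_succ_of_logConvex ha hconv n) (pow_nonneg (ha 0) n)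
      _ = a 0 ^ (n + 1) * a (n + 1) := by ring

/-- The ratios `a (n+1) / a n` increase, so they cannot start above the growth rate `M`. -/
lemma apply_one_le_mul_of_logConvex {K M : ℝ} (hM : 0 ≤ M) (hbd : ∀ n, a n ≤ K * M ^ n) :
    a 1 ≤ M * a 0 := by
  rcases (ha 0).eq_or_lt with h0 | h0
  · have : a 1 ^ 2 ≤ 0 := by simpa [← h0] using hconv 0
    rw [← h0, mul_zero]
    nlinarith [ha 1]
  rcases hM.eq_or_lt with rfl | hM
  · simpa using hbd 1
  by_contra! hlt
  have hMa : 0 < M * a 0 := mul_pos hM h0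
  obtain ⟨n, hn⟩ := pow_unbounded_of_one_lt (K / a 0) ((one_lt_div hMa).mpr hlt)
  refine hn.not_ge ?_
  rw [div_pow, div_le_div_iff₀ (pow_pos hMa n) h0]
  calc a 1 ^ n * a 0 ≤ a 0 ^ n * a n := pow_mul_le_pow_mul_of_logConvex ha hconv n
    _ ≤ a 0 ^ n * (K * M ^ n) := mul_le_mul_of_nonneg_left (hbd n) (pow_nonneg (ha 0) n)
    _ = K * (M * a 0) ^ n := by ring

end LogConvex

lemma norm_iterate_apply_le {𝕜 E : Type*} [NontriviallyNormedField 𝕜]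
    [SeminormedAddCommGroup E] [NormedSpace 𝕜 E] (R : E →L[𝕜] E) (x : E) (n : ℕ) : ‖R^[n] x‖ ≤ ‖R‖ ^ n * ‖x‖ := by
  induction n with
  | zero => simp
  | succ n ih =>
    rw [Function.iterate_succ_apply', pow_succ', mul_assoc]
    exact (R.le_opNorm _).trans (mul_le_mul_of_nonneg_left ih (norm_nonneg R))

lemma aNorm_nonneg (A : H →L[ℂ] H) (x : H) : 0 ≤ aNorm A x := Real.sqrt_nonneg _

lemma aNorm_le_sqrt_norm_mul_norm (A : H →L[ℂ] H) (x : H) : aNorm A x ≤ √‖A‖ * ‖x‖ := by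
  have h : (⟪A x, x⟫_ℂ).re ≤ ‖A‖ * ‖x‖ ^ 2 :=
    calc (⟪A x, x⟫_ℂ).re ≤ ‖A x‖ * ‖x‖ := (Complex.re_le_norm _).trans (norm_inner_le_norm _ _)
      _ ≤ ‖A‖ * ‖x‖ * ‖x‖ := mul_le_mul_of_nonneg_right (A.le_opNorm x) (norm_nonneg x)
      _ = ‖A‖ * ‖x‖ ^ 2 := by ring
  calc aNorm A x ≤ √(‖A‖ * ‖x‖ ^ 2) := Real.sqrt_le_sqrt h
    _ = √‖A‖ * ‖x‖ := by rw [Real.sqrt_mul (norm_nonneg A), Real.sqrt_sq (norm_nonneg x)]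

lemma aNorm_smul (A : H →L[ℂ] H) (z : ℂ) (x : H) : aNorm A (z • x) = ‖z‖ * aNorm A x := by
  have h : ⟪A (z • x), z • x⟫_ℂ = ((‖z‖ ^ 2 : ℝ) : ℂ) * ⟪A x, x⟫_ℂ := by
    rw [map_smul, inner_smul_left, inner_smul_right, ← mul_assoc, RCLike.conj_mul]
    norm_cast
  rw [aNorm, aNorm, h, Complex.re_ofReal_mul, Real.sqrt_mul (sq_nonneg _),
    Real.sqrt_sq (norm_nonneg z)]

def IsASymmetric (A R : H →L[ℂ] H) : Prop :=
  ∀ u v, ⟪A (R u), v⟫_ℂ = ⟪A u, R v⟫_ℂ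

section Positive

variable {A : H →L[ℂ] H} (hA : A.IsPositive)
include hA

lemma aNorm_sq (x : H) : aNorm A x ^ 2 = (⟪A x, x⟫_ℂ).re :=
  Real.sq_sqrt (hA.re_inner_nonneg_left x)

lemma norm_inner_le_aNorm_mul_aNorm (x y : H) : ‖⟪A x, y⟫_ℂ‖ ≤ aNorm A x * aNorm A y := by
  let core : PreInnerProductSpace.Core ℂ H :=
    { inner x y := ⟪A x, y⟫_ℂ
      conj_inner_symm x y := by
        change (starRingEnd ℂ) ⟪A y, x⟫_ℂ = ⟪A x, y⟫_ℂ
        rw [inner_conj_symm, hA.inner_left_eq_inner_right]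
      re_inner_nonneg := hA.re_inner_nonneg_left
      add_left x y z := by
        change ⟪A (x + y), z⟫_ℂ = ⟪A x, z⟫_ℂ + ⟪A y, z⟫_ℂ
        rw [map_add, inner_add_left]
      smul_left x y r := by
        change ⟪A (r • x), y⟫_ℂ = (starRingEnd ℂ) r * ⟪A x, y⟫_ℂ
        rw [map_smul, inner_smul_left] }
  have h := InnerProductSpace.Core.inner_mul_inner_self_le (c := core) x y
  change ‖⟪A x, y⟫_ℂ‖ * ‖⟪A y, x⟫_ℂ‖ ≤ (⟪A x, x⟫_ℂ).re * (⟪A y, y⟫_ℂ).re at h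
  have hsymm : ‖⟪A y, x⟫_ℂ‖ = ‖⟪A x, y⟫_ℂ‖ := by
    rw [← inner_conj_symm, ← hA.inner_left_eq_inner_right, RCLike.norm_conj]
  rw [hsymm, ← sq, ← aNorm_sq hA, ← aNorm_sq hA, ← mul_pow] at h
  exact (pow_le_pow_iff_left₀ (norm_nonneg _)
    (mul_nonneg (aNorm_nonneg A x) (aNorm_nonneg A y)) two_ne_zero).mp h

lemma IsASymmetric.aNorm_apply_le {R : H →L[ℂ] H} (hR : IsASymmetric A R) (x : H) :
    aNorm A (R x) ≤ ‖R‖ * aNorm A x := by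
  have hconv (n : ℕ) :
      aNorm A (R^[n + 1] x) ^ 2 ≤ aNorm A (R^[n] x) * aNorm A (R^[n + 2] x) := by
    simp only [aNorm_sq hA, Function.iterate_succ_apply']
    rw [hR]
    exact (Complex.re_le_norm _).trans (norm_inner_le_aNorm_mul_aNorm hA _ _)
  have hbd (n : ℕ) : aNorm A (R^[n] x) ≤ (√‖A‖ * ‖x‖) * ‖R‖ ^ n :=
    calc aNorm A (R^[n] x) ≤ √‖A‖ * ‖R^[n] x‖ := aNorm_le_sqrt_norm_mul_norm A _
      _ ≤ √‖A‖ * (‖R‖ ^ n * ‖x‖) :=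
        mul_le_mul_of_nonneg_left (norm_iterate_apply_le R x n) (Real.sqrt_nonneg _)
      _ = (√‖A‖ * ‖x‖) * ‖R‖ ^ n := by ring
  simpa using apply_one_le_mul_of_logConvex (fun n => aNorm_nonneg A (R^[n] x)) hconv
    (norm_nonneg R) hbd

end Positive

def wASet (A T : H →L[ℂ] H) : Set ℝ :=
  {r : ℝ | ∃ x : H, aNorm A x = 1 ∧ r = ‖⟪A (T x), x⟫_ℂ‖}

def wBSet (A T1 T2 T3 T4 : H →L[ℂ] H) : Set ℝ :=
  {r : ℝ | ∃ x y : H, Real.sqrt ((⟪A x, x⟫_ℂ).re + (⟪A y, y⟫_ℂ).re) = 1 ∧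
    r = ‖⟪A (T1 x + T2 y), x⟫_ℂ + ⟪A (T3 x + T4 y), y⟫_ℂ‖}

lemma wA_nonneg (A T : H →L[ℂ] H) : 0 ≤ wA A T :=
  Real.sSup_nonneg (by rintro r ⟨x, -, rfl⟩; exact norm_nonneg _)

lemma wB_nonneg (A T1 T2 T3 T4 : H →L[ℂ] H) : 0 ≤ wB A T1 T2 T3 T4 :=
  Real.sSup_nonneg (by rintro r ⟨x, y, -, rfl⟩; exact norm_nonneg _)

section Positive

variable {A T : H →L[ℂ] H} (hA : A.IsPositive)
include hA

lemma bddAbove_wASet {C : ℝ} (hT : ∀ x, aNorm A (T x) ≤ C * aNorm A x) :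
    BddAbove (wASet A T) := by
  refine ⟨C, ?_⟩
  rintro r ⟨x, hx, rfl⟩
  calc ‖⟪A (T x), x⟫_ℂ‖ ≤ aNorm A (T x) * aNorm A x := norm_inner_le_aNorm_mul_aNorm hA _ _
    _ ≤ C := by simpa [hx] using hT x

lemma norm_inner_le_wA (hT : BddAbove (wASet A T)) (x : H) :
    ‖⟪A (T x), x⟫_ℂ‖ ≤ wA A T * (⟪A x, x⟫_ℂ).re := by
  rw [← aNorm_sq hA]
  rcases (aNorm_nonneg A x).eq_or_lt with h0 | h0
  · simpa [← h0] using norm_inner_le_aNorm_mul_aNorm hA (T x) x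
  set c := aNorm A x
  have hz : ‖(c : ℂ)⁻¹‖ = c⁻¹ := by
    rw [norm_inv, Complex.norm_real, Real.norm_of_nonneg h0.le]
  have hmem : c⁻¹ ^ 2 * ‖⟪A (T x), x⟫_ℂ‖ ∈ wASet A T := by
    refine ⟨(c : ℂ)⁻¹ • x, by rw [aNorm_smul, hz, inv_mul_cancel₀ h0.ne'], ?_⟩
    rw [map_smul, map_smul, inner_smul_left, inner_smul_right, norm_mul, norm_mul,
      RCLike.norm_conj, hz]
    ring
  have hle := le_csSup hT hmem
  calc ‖⟪A (T x), x⟫_ℂ‖ = c ^ 2 * (c⁻¹ ^ 2 * ‖⟪A (T x), x⟫_ℂ‖) := by field_simp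
    _ ≤ c ^ 2 * wA A T := mul_le_mul_of_nonneg_left hle (sq_nonneg c)
    _ = wA A T * c ^ 2 := mul_comm _ _

lemma norm_inner_sub_inner_le_wA (hT : BddAbove (wASet A T)) (x y : H) :
    ‖⟪A (T y), x⟫_ℂ - ⟪A (T x), y⟫_ℂ‖ ≤ wA A T * ((⟪A x, x⟫_ℂ).re + (⟪A y, y⟫_ℂ).re) := by
  set u := x + Complex.I • y
  set v := x - Complex.I • y
  have hdiff : ⟪A (T u), u⟫_ℂ - ⟪A (T v), v⟫_ℂ
      = (-2 * Complex.I) * (⟪A (T y), x⟫_ℂ - ⟪A (T x), y⟫_ℂ) := by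
    simp only [u, v, map_add, map_sub, map_smul, inner_add_left, inner_add_right, inner_sub_left,
      inner_sub_right, inner_smul_left, inner_smul_right, Complex.conj_I]
    ring
  have hsum : (⟪A u, u⟫_ℂ).re + (⟪A v, v⟫_ℂ).re = 2 * ((⟪A x, x⟫_ℂ).re + (⟪A y, y⟫_ℂ).re) := by
    rw [← Complex.add_re]
    have : ⟪A u, u⟫_ℂ + ⟪A v, v⟫_ℂ = 2 * (⟪A x, x⟫_ℂ + ⟪A y, y⟫_ℂ) := by
      simp only [u, v, map_add, map_sub, map_smul, inner_add_left, inner_add_right,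
        inner_sub_left, inner_sub_right, inner_smul_left, inner_smul_right, Complex.conj_I]
      linear_combination (-2 * ⟪A y, y⟫_ℂ) * Complex.I_sq
    simp [this, Complex.add_re]
  have h2 : 2 * ‖⟪A (T y), x⟫_ℂ - ⟪A (T x), y⟫_ℂ‖ ≤
      2 * (wA A T * ((⟪A x, x⟫_ℂ).re + (⟪A y, y⟫_ℂ).re)) :=
    calc 2 * ‖⟪A (T y), x⟫_ℂ - ⟪A (T x), y⟫_ℂ‖ = ‖⟪A (T u), u⟫_ℂ - ⟪A (T v), v⟫_ℂ‖ := by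
          simp [hdiff, Complex.norm_I]
      _ ≤ ‖⟪A (T u), u⟫_ℂ‖ + ‖⟪A (T v), v⟫_ℂ‖ := norm_sub_le _ _
      _ ≤ wA A T * (⟪A u, u⟫_ℂ).re + wA A T * (⟪A v, v⟫_ℂ).re :=
          add_le_add (norm_inner_le_wA hA hT u) (norm_inner_le_wA hA hT v)
      _ = 2 * (wA A T * ((⟪A x, x⟫_ℂ).re + (⟪A y, y⟫_ℂ).re)) := by rw [← mul_add, hsum]; ring
  linarith

end Positive

lemma norm_inner_antidiag_le {A T1 T2 : H →L[ℂ] H} (hA : A.IsPositive)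
    (hT1 : BddAbove (wASet A T1)) (hT2 : BddAbove (wASet A T2)) (x y : H) :
    ‖⟪A (T1 x + T2 y), x⟫_ℂ + ⟪A ((-T2) x + (-T1) y), y⟫_ℂ‖ ≤
      (wA A T1 + wA A T2) * ((⟪A x, x⟫_ℂ).re + (⟪A y, y⟫_ℂ).re) := by
  have hsplit : ⟪A (T1 x + T2 y), x⟫_ℂ + ⟪A ((-T2) x + (-T1) y), y⟫_ℂ
      = (⟪A (T1 x), x⟫_ℂ - ⟪A (T1 y), y⟫_ℂ) + (⟪A (T2 y), x⟫_ℂ - ⟪A (T2 x), y⟫_ℂ) := by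
    simp only [map_add, inner_add_left, neg_apply, map_neg, inner_neg_left]
    ring
  rw [hsplit]
  calc _ ≤ (‖⟪A (T1 x), x⟫_ℂ‖ + ‖⟪A (T1 y), y⟫_ℂ‖) + ‖⟪A (T2 y), x⟫_ℂ - ⟪A (T2 x), y⟫_ℂ‖ :=
        (norm_add_le _ _).trans (add_le_add_left (norm_sub_le _ _) _)
    _ ≤ (wA A T1 * (⟪A x, x⟫_ℂ).re + wA A T1 * (⟪A y, y⟫_ℂ).re)
          + wA A T2 * ((⟪A x, x⟫_ℂ).re + (⟪A y, y⟫_ℂ).re) :=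
        add_le_add (add_le_add (norm_inner_le_wA hA hT1 x) (norm_inner_le_wA hA hT1 y))
          (norm_inner_sub_inner_le_wA hA hT2 x y)
    _ = _ := by ring

lemma forall_mem_wBSet_antidiag_le {A T1 T2 : H →L[ℂ] H} (hA : A.IsPositive)
    (hT1 : BddAbove (wASet A T1)) (hT2 : BddAbove (wASet A T2)) :
    ∀ r ∈ wBSet A T1 T2 (-T2) (-T1), r ≤ wA A T1 + wA A T2 := by
  rintro r ⟨x, y, hxy, rfl⟩
  simpa [Real.sqrt_eq_one.mp hxy] using norm_inner_antidiag_le hA hT1 hT2 x y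

lemma wA_le_wB {A T1 T2 T3 T4 : H →L[ℂ] H} (hB : BddAbove (wBSet A T1 T2 T3 T4)) :
    wA A T1 ≤ wB A T1 T2 T3 T4 := by
  refine Real.sSup_le ?_ (wB_nonneg A T1 T2 T3 T4)
  rintro r ⟨x, hx, rfl⟩
  exact le_csSup hB ⟨x, 0, by simpa [aNorm] using hx, by simp⟩

lemma wA_le_wB_antidiag {A T1 T2 : H →L[ℂ] H} (hB : BddAbove (wBSet A T1 T2 (-T2) (-T1))) :
    wA A T2 ≤ wB A T1 T2 (-T2) (-T1) := by
  refine Real.sSup_le ?_ (wB_nonneg A T1 T2 (-T2) (-T1))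
  rintro r ⟨x, hx, rfl⟩
  have hx1 : (⟪A x, x⟫_ℂ).re = 1 := Real.sqrt_eq_one.mp hx
  set c : ℂ := (((√2)⁻¹ : ℝ) : ℂ)
  have hc : (starRingEnd ℂ) c = c := Complex.conj_ofReal _
  have hc2 : c * c = 1 / 2 := by
    rw [← Complex.ofReal_mul, ← mul_inv, Real.mul_self_sqrt zero_le_two]
    norm_num
  have hnorm : ⟪A (c • x), c • x⟫_ℂ + ⟪A ((c * Complex.I) • x), (c * Complex.I) • x⟫_ℂ
      = ⟪A x, x⟫_ℂ := by
    simp only [map_smul, inner_smul_left, inner_smul_right, map_mul, hc, Complex.conj_I]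
    linear_combination (2 * ⟪A x, x⟫_ℂ) * hc2 + (-(c * c * ⟪A x, x⟫_ℂ)) * Complex.I_sq
  have hval : ⟪A (T1 (c • x) + T2 ((c * Complex.I) • x)), c • x⟫_ℂ
      + ⟪A ((-T2) (c • x) + (-T1) ((c * Complex.I) • x)), (c * Complex.I) • x⟫_ℂ
      = -Complex.I * ⟪A (T2 x), x⟫_ℂ := by
    simp only [map_add, map_smul, neg_apply, map_neg, inner_add_left, inner_neg_left,
      inner_smul_left, inner_smul_right, map_mul, Complex.conj_I, hc]
    linear_combination (c ^ 2 * ⟪A (T1 x), x⟫_ℂ) * Complex.I_sq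
      + (-2 * Complex.I * ⟪A (T2 x), x⟫_ℂ) * hc2
  refine le_csSup hB ⟨c • x, (c * Complex.I) • x, ?_, ?_⟩
  · rw [← Complex.add_re, hnorm, hx1, Real.sqrt_one]
  · rw [hval, norm_mul, norm_neg, Complex.norm_I, one_mul]

end

section AAdjoint

variable {A T S : H →L[ℂ] H} (hA : A.IsPositive) (hS : A ∘L S = adjoint T ∘L A)
include hA hS

lemma inner_apply_eq_inner_of_aAdjoint (u v : H) : ⟪A (T u), v⟫_ℂ = ⟪A u, S v⟫_ℂ := by
  have hSv : A (S v) = adjoint T (A v) := DFunLike.congr_fun hS v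
  rw [hA.inner_left_eq_inner_right, ← adjoint_inner_right, ← hSv, hA.inner_left_eq_inner_right]

lemma isASymmetric_comp_of_aAdjoint : IsASymmetric A (S ∘L T) := by
  intro u v
  rw [comp_apply, comp_apply, ← inner_apply_eq_inner_of_aAdjoint hA hS,
    ← comp_apply A S, hS, comp_apply, adjoint_inner_left]

lemma aNorm_apply_le_of_aAdjoint (x : H) : aNorm A (T x) ≤ √‖S ∘L T‖ * aNorm A x := by
  have hsq : aNorm A (T x) ^ 2 ≤ ‖S ∘L T‖ * aNorm A x ^ 2 :=
    calc aNorm A (T x) ^ 2 = (⟪A x, (S ∘L T) x⟫_ℂ).re := by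
          rw [aNorm_sq hA, inner_apply_eq_inner_of_aAdjoint hA hS, comp_apply]
      _ ≤ aNorm A x * aNorm A ((S ∘L T) x) :=
          (Complex.re_le_norm _).trans (norm_inner_le_aNorm_mul_aNorm hA _ _)
      _ ≤ aNorm A x * (‖S ∘L T‖ * aNorm A x) :=
          mul_le_mul_of_nonneg_left ((isASymmetric_comp_of_aAdjoint hA hS).aNorm_apply_le hA x)
            (aNorm_nonneg A x)
      _ = ‖S ∘L T‖ * aNorm A x ^ 2 := by ring
  calc aNorm A (T x) ≤ √(‖S ∘L T‖ * aNorm A x ^ 2) := Real.le_sqrt_of_sq_le hsq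
    _ = √‖S ∘L T‖ * aNorm A x := by
      rw [Real.sqrt_mul (norm_nonneg _), Real.sqrt_sq (aNorm_nonneg A x)]

lemma bddAbove_wASet_of_aAdjoint : BddAbove (wASet A T) :=
  bddAbove_wASet hA (aNorm_apply_le_of_aAdjoint hA hS)

end AAdjoint

theorem stmt2_general (A T1 T2 : H →L[ℂ] H) (hA : A.IsPositive)
    (h1 : ∃ S : H →L[ℂ] H, A ∘L S = (ContinuousLinearMap.adjoint T1) ∘L A)
    (h2 : ∃ S : H →L[ℂ] H, A ∘L S = (ContinuousLinearMap.adjoint T2) ∘L A) :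
    max (wA A T1) (wA A T2) ≤ wB A T1 T2 (-T2) (-T1) ∧
      wB A T1 T2 (-T2) (-T1) ≤ wA A T1 + wA A T2 := by
  obtain ⟨S1, hS1⟩ := h1
  obtain ⟨S2, hS2⟩ := h2
  have hB := forall_mem_wBSet_antidiag_le hA (bddAbove_wASet_of_aAdjoint hA hS1)
    (bddAbove_wASet_of_aAdjoint hA hS2)
  exact ⟨max_le (wA_le_wB ⟨_, hB⟩) (wA_le_wB_antidiag ⟨_, hB⟩),
    Real.sSup_le hB (add_nonneg (wA_nonneg A T1) (wA_nonneg A T2))⟩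

theorem stmt2 (A T1 T2 : H →L[ℂ] H) (hA : A.IsPositive) (hA' : ∀ x : H, x ≠ 0 → 0 < (⟪A x, x⟫_ℂ).re)
    (h1 : ∃ S : H →L[ℂ] H, A ∘L S = (ContinuousLinearMap.adjoint T1) ∘L A)
    (h2 : ∃ S : H →L[ℂ] H, A ∘L S = (ContinuousLinearMap.adjoint T2) ∘L A) :
    max (wA A T1) (wA A T2) ≤ wB A T1 T2 (-T2) (-T1) ∧
      wB A T1 T2 (-T2) (-T1) ≤ wA A T1 + wA A T2 :=
  stmt2_general A T1 T2 hA h1 h2
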